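/- For every X ∈ L, the pre-image of {X} under the order-matching clearing operator is exactly Γ(X): {Y ∈ E : C(Y) = X} = Γ(X). -/
import Mathlib


open scoped BigOperators

namespace OB

/-- The space of order configurations `E = ℕ^d × ℕ^d`: buy side and sell side. -/
abbrev E (d : ℕ) := (Fin d → ℕ) × (Fin d → ℕ)

/-- Price support of a vector: the set of prices `j ∈ {1,…,d}` with a positive queue. -/
def supp {d : ℕ} (Z : Fin d → ℕ) : Finset ℕ :=
  (Finset.univ.filter fun j : Fin d => 0 < Z j).image fun j : Fin d => (j : ℕ) + 1

/-- `sup supp`, with the convention `sup ∅ = 0`. -/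
def supSupp {d : ℕ} (Z : Fin d → ℕ) : ℕ := (supp Z).sup id

/-- `inf supp`, with the convention `inf ∅ = d+1`. -/
def infSupp {d : ℕ} (Z : Fin d → ℕ) : ℕ :=
  if h : (supp Z).Nonempty then (supp Z).min' h else d + 1

/-- bid price `b(X) = sup supp(X⁺)`. -/
def bid {d : ℕ} (X : E d) : ℕ := supSupp X.1

/-- ask price `a(X) = inf supp(X⁻)`. -/
def ask {d : ℕ} (X : E d) : ℕ := infSupp X.2

/-- Admissible limit order book configurations: `a(X) > b(X)`. -/
def Lset (d : ℕ) : Set (E d) := {X | bid X < ask X}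

/-- Entry of a vector at price `i` (prices run from 1 to d; 0 outside this range). -/
def ent {d : ℕ} (z : Fin d → ℕ) (i : ℕ) : ℕ :=
  if h : 1 ≤ i ∧ i ≤ d then z ⟨i - 1, by omega⟩ else 0

/-- Standard basis vector at price `i`. -/
def e {d : ℕ} (i : ℕ) : Fin d → ℕ := fun j => if (j : ℕ) + 1 = i then 1 else 0

/-- `τ_i`: zero out all entries at prices `> i`. -/
def tauLow {d : ℕ} (i : ℤ) (z : Fin d → ℕ) : Fin d → ℕ :=
  fun j => if ((j : ℕ) + 1 : ℤ) ≤ i then z j else 0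

/-- `τ^i`: zero out all entries at prices `< i`. -/
def tauHigh {d : ℕ} (i : ℤ) (z : Fin d → ℕ) : Fin d → ℕ :=
  fun j => if i ≤ ((j : ℕ) + 1 : ℤ) then z j else 0

/-- `B_X(k) = Σ_{i ≥ k} X⁺_i`. -/
def BX {d : ℕ} (X : E d) (k : ℕ) : ℕ := ∑ j : Fin d, if k ≤ (j : ℕ) + 1 then X.1 j else 0

/-- `S_X(k) = Σ_{i ≤ k} X⁻_i`. -/
def SX {d : ℕ} (X : E d) (k : ℕ) : ℕ := ∑ j : Fin d, if (j : ℕ) + 1 ≤ k then X.2 j else 0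

/-- `g_X(k) = S_X(k) − B_X(k)`. -/
def gX {d : ℕ} (X : E d) (k : ℕ) : ℤ := (SX X k : ℤ) - (BX X k : ℤ)

/-- `p_A(X) = inf{k ∈ {1,…,d} : g_X(k) > 0}`, convention `inf ∅ = d+1`. -/
def pA {d : ℕ} (X : E d) : ℕ :=
  if h : ((Finset.Icc 1 d).filter fun k => 0 < gX X k).Nonempty
  then ((Finset.Icc 1 d).filter fun k => 0 < gX X k).min' h else d + 1

/-- `p_B(X) = sup{k ∈ {1,…,d} : g_X(k) < 0}`, convention `sup ∅ = 0`. -/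
def pB {d : ℕ} (X : E d) : ℕ :=
  ((Finset.Icc 1 d).filter fun k => gX X k < 0).sup id

/-- `B_X⁻¹(z) = sup{i ∈ {1,…,d} : B_X(i) ≥ z}`, convention `sup ∅ = 0`. -/
def Binv {d : ℕ} (X : E d) (z : ℕ) : ℕ :=
  ((Finset.Icc 1 d).filter fun i => z ≤ BX X i).sup id

/-- `S_X⁻¹(z) = inf{i ∈ {1,…,d} : S_X(i) ≥ z}`, convention `inf ∅ = d+1`. -/
def Sinv {d : ℕ} (X : E d) (z : ℕ) : ℕ :=
  if h : ((Finset.Icc 1 d).filter fun i => z ≤ SX X i).Nonempty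
  then ((Finset.Icc 1 d).filter fun i => z ≤ SX X i).min' h else d + 1

/-- Buy side after order-matching clearing (Eq. (11) of the paper):
`C(X)⁺ = τ_{p_B}(X⁺)` if `g_X(p_B) ≤ −X⁺_{p_B}`, and
`C(X)⁺ = τ_{p_B−1}(X⁺) − min{0, g_X(p_B)}·e_{p_B}` otherwise. -/
def clearPlus {d : ℕ} (X : E d) : Fin d → ℕ :=
  if gX X (pB X) ≤ -(ent X.1 (pB X) : ℤ) then tauLow (pB X : ℤ) X.1
  else fun j => tauLow ((pB X : ℤ) - 1) X.1 j + (max 0 (-(gX X (pB X)))).toNat * e (pB X) j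

/-- Sell side after order-matching clearing (Eq. (12) of the paper):
`C(X)⁻ = τ^{p_A}(X⁻)` if `g_X(p_A) ≥ X⁻_{p_A}`, and
`C(X)⁻ = τ^{p_A+1}(X⁻) + max{0, g_X(p_A)}·e_{p_A}` otherwise. -/
def clearMinus {d : ℕ} (X : E d) : Fin d → ℕ :=
  if (ent X.2 (pA X) : ℤ) ≤ gX X (pA X) then tauHigh (pA X : ℤ) X.2
  else fun j => tauHigh ((pA X : ℤ) + 1) X.2 j + (max 0 (gX X (pA X))).toNat * e (pA X) j

/-- The order-matching clearing operator. -/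
def clear {d : ℕ} (X : E d) : E d := (clearPlus X, clearMinus X)

/-- Price support of an integer-valued vector. -/
def suppZ {d : ℕ} (W : Fin d → ℤ) : Finset ℕ :=
  (Finset.univ.filter fun j : Fin d => 0 < W j).image fun j : Fin d => (j : ℕ) + 1

/-- `sup supp` of an integer-valued vector, convention `sup ∅ = 0`. -/
def supSuppZ {d : ℕ} (W : Fin d → ℤ) : ℕ := (suppZ W).sup id

/-- `inf supp` of an integer-valued vector, convention `inf ∅ = d+1`. -/
def infSuppZ {d : ℕ} (W : Fin d → ℤ) : ℕ :=
  if h : (suppZ W).Nonempty then (suppZ W).min' h else d + 1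

/-- `D : E → E` is an order-matching clearing operator: it maps into `L`, its fixed
points are exactly `L`, and, with `Z(X) = X − D(X)` (computed in `ℤ^d × ℤ^d`), the
conditions (A1)–(A4) of Definition 2.2 hold. -/
def IsOrderMatchingClearing {d : ℕ} (D : E d → E d) : Prop :=
  (∀ X : E d, D X ∈ Lset d) ∧
  (∀ X : E d, X ∈ Lset d ↔ D X = X) ∧
  (∀ X : E d,
    -- (A1): the executed orders `Z(X) = X − D(X)` have nonnegative entries
    (∀ j, (D X).1 j ≤ X.1 j ∧ (D X).2 j ≤ X.2 j) ∧
    -- (A2): `|Z(X)⁺| = |Z(X)⁻|`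
    (∑ j, ((X.1 j : ℤ) - ((D X).1 j : ℤ))) = (∑ j, ((X.2 j : ℤ) - ((D X).2 j : ℤ))) ∧
    -- (A3): `sup supp(Z(X)⁻) ≤ inf supp(Z(X)⁺)`
    supSuppZ (fun j => (X.2 j : ℤ) - ((D X).2 j : ℤ)) ≤
      infSuppZ (fun j => (X.1 j : ℤ) - ((D X).1 j : ℤ)) ∧
    -- (A4): `sup supp(Z(X)⁻) ≤ inf supp(D(X)⁻)` and `inf supp(Z(X)⁺) ≥ sup supp(D(X)⁺)`
    supSuppZ (fun j => (X.2 j : ℤ) - ((D X).2 j : ℤ)) ≤ infSupp (D X).2 ∧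
    supSupp (D X).1 ≤ infSuppZ (fun j => (X.1 j : ℤ) - ((D X).1 j : ℤ)))


/-- The set `Γ(X)` of Proposition 2.7: configurations obtained from `X ∈ L` by adding
a pair of order distributions `Z` with `|Z⁺| = |Z⁻|`, `sup supp(Z⁻) ≤ inf supp(Z⁺)`,
`sup supp(Z⁻) ≤ a(X)` and `inf supp(Z⁺) ≥ b(X)`. -/
def Gamma {d : ℕ} (X : E d) : Set (E d) :=
  {Y | ∃ Z : E d, Y = X + Z ∧
    (∑ j, Z.1 j) = (∑ j, Z.2 j) ∧
    supSupp Z.2 ≤ infSupp Z.1 ∧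
    supSupp Z.2 ≤ ask X ∧
    bid X ≤ infSupp Z.1}
variable {d : ℕ}

lemma supSupp_le {z : Fin d → ℕ} {n : ℕ} (h : ∀ j : Fin d, z j ≠ 0 → (j:ℕ)+1 ≤ n) :
    supSupp z ≤ n := by
  refine Finset.sup_le ?_
  intro i hi
  simp only [supp, Finset.mem_image, Finset.mem_filter, Finset.mem_univ, true_and] at hi
  obtain ⟨j, hj, rfl⟩ := hi
  exact h j hj.ne'

lemma le_supSupp {z : Fin d → ℕ} {j : Fin d} (h : z j ≠ 0) : (j:ℕ)+1 ≤ supSupp z := by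
  refine Finset.le_sup (f := id) ?_
  simp only [supp, Finset.mem_image, Finset.mem_filter, Finset.mem_univ, true_and]
  exact ⟨j, Nat.pos_of_ne_zero h, rfl⟩

lemma infSupp_le {z : Fin d → ℕ} {j : Fin d} (h : z j ≠ 0) : infSupp z ≤ (j:ℕ)+1 := by
  have hm : ((j:ℕ)+1) ∈ supp z := by
    simp only [supp, Finset.mem_image, Finset.mem_filter, Finset.mem_univ, true_and]
    exact ⟨j, Nat.pos_of_ne_zero h, rfl⟩
  rw [infSupp, dif_pos ⟨_, hm⟩]
  exact Finset.min'_le _ _ hm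

lemma le_infSupp {z : Fin d → ℕ} {n : ℕ} (hn : n ≤ d+1)
    (h : ∀ j : Fin d, z j ≠ 0 → n ≤ (j:ℕ)+1) : n ≤ infSupp z := by
  rw [infSupp]
  split
  · rename_i hne
    refine Finset.le_min' _ _ _ ?_
    intro y hy
    simp only [supp, Finset.mem_image, Finset.mem_filter, Finset.mem_univ, true_and] at hy
    obtain ⟨j, hj, rfl⟩ := hy
    exact h j hj.ne'
  · exact hn

lemma supSupp_le_d (z : Fin d → ℕ) : supSupp z ≤ d :=
  supSupp_le fun j _ => j.2

lemma infSupp_le_d1 (z : Fin d → ℕ) : infSupp z ≤ d+1 := by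
  rw [infSupp]
  split
  · rename_i hne
    obtain ⟨y, hy⟩ := hne
    have h1 := Finset.min'_le (supp z) y hy
    have h2 : y ≤ d + 1 := by
      simp only [supp, Finset.mem_image, Finset.mem_filter, Finset.mem_univ, true_and] at hy
      obtain ⟨j, hj, rfl⟩ := hy
      have := j.2; omega
    omega
  · exact le_refl _
lemma eq_zero_of_supSupp_lt {z : Fin d → ℕ} {j : Fin d} (h : supSupp z < (j:ℕ)+1) : z j = 0 := by
  by_contra hz; exact absurd (le_supSupp hz) (by omega)

lemma eq_zero_of_lt_infSupp {z : Fin d → ℕ} {j : Fin d} (h : (j:ℕ)+1 < infSupp z) : z j = 0 := by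
  by_contra hz; exact absurd (infSupp_le hz) (by omega)

lemma ent_apply (z : Fin d → ℕ) (j : Fin d) : ent z ((j:ℕ)+1) = z j := by
  have hj := j.2
  rw [ent, dif_pos ⟨by omega, by omega⟩]
  congr 1

lemma ent_zero (z : Fin d → ℕ) : ent z 0 = 0 := by
  rw [ent, dif_neg (by omega)]

lemma ent_gt (z : Fin d → ℕ) {k : ℕ} (h : d < k) : ent z k = 0 := by
  rw [ent, dif_neg (by omega)]

lemma one_le_infSupp (z : Fin d → ℕ) : 1 ≤ infSupp z :=
  le_infSupp (by omega) (fun j _ => by omega)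

lemma nat_sup_mem {s : Finset ℕ} (h : s.Nonempty) : s.sup id ∈ s := by
  rw [← Finset.sup'_eq_sup h id, ← Finset.max'_eq_sup']
  exact Finset.max'_mem s h

lemma ent_supSupp {z : Fin d → ℕ} (h : 1 ≤ supSupp z) : ent z (supSupp z) ≠ 0 := by
  have hne : (supp z).Nonempty := by
    by_contra he
    rw [Finset.not_nonempty_iff_eq_empty] at he
    rw [supSupp, he] at h; simp at h
  have hm : supSupp z ∈ supp z := nat_sup_mem hne
  simp only [supp, Finset.mem_image, Finset.mem_filter, Finset.mem_univ, true_and] at hm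
  obtain ⟨j, hj, hje⟩ := hm
  rw [← hje, ent_apply]; omega

lemma ent_infSupp {z : Fin d → ℕ} (h : infSupp z ≤ d) : ent z (infSupp z) ≠ 0 := by
  have hne : (supp z).Nonempty := by
    by_contra he
    rw [Finset.not_nonempty_iff_eq_empty] at he
    rw [infSupp, dif_neg (by rw [he]; simp)] at h; omega
  have hm : infSupp z ∈ supp z := by
    rw [infSupp, dif_pos hne]; exact Finset.min'_mem _ _
  simp only [supp, Finset.mem_image, Finset.mem_filter, Finset.mem_univ, true_and] at hm
  obtain ⟨j, hj, hje⟩ := hm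
  rw [← hje, ent_apply]; omega

lemma SX_zero (X : E d) : SX X 0 = 0 := by
  refine Finset.sum_eq_zero fun j _ => by rw [if_neg (by omega)]

lemma BX_dp1 (X : E d) : BX X (d+1) = 0 := by
  refine Finset.sum_eq_zero fun j _ => by rw [if_neg (by have := j.2; omega)]

lemma SX_mono (X : E d) {k l : ℕ} (h : k ≤ l) : SX X k ≤ SX X l := by
  refine Finset.sum_le_sum fun j _ => ?_
  by_cases h1 : (j:ℕ)+1 ≤ k
  · rw [if_pos h1, if_pos (by omega)]
  · rw [if_neg h1]; exact Nat.zero_le _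

lemma BX_anti (X : E d) {k l : ℕ} (h : k ≤ l) : BX X l ≤ BX X k := by
  refine Finset.sum_le_sum fun j _ => ?_
  by_cases h1 : l ≤ (j:ℕ)+1
  · rw [if_pos h1, if_pos (by omega)]
  · rw [if_neg h1]; exact Nat.zero_le _

lemma gX_mono (X : E d) {k l : ℕ} (h : k ≤ l) : gX X k ≤ gX X l := by
  have h1 := SX_mono X h
  have h2 := BX_anti X h
  rw [gX, gX]; omega

lemma sum_ite_eq_ent (z : Fin d → ℕ) {k : ℕ} (h1 : 1 ≤ k) (h2 : k ≤ d) :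
    (∑ j : Fin d, if (j:ℕ)+1 = k then z j else 0) = ent z k := by
  rw [ent, dif_pos ⟨h1, h2⟩]
  rw [Finset.sum_eq_single_of_mem (⟨k-1, by omega⟩ : Fin d) (Finset.mem_univ _)]
  · rw [if_pos (by simp only [Fin.val_mk]; omega)]
  · intro b _ hb
    rw [if_neg]
    intro hc
    exact hb (Fin.ext (by simp only [Fin.val_mk]; omega))

lemma SX_step (X : E d) {k : ℕ} (h1 : 1 ≤ k) (h2 : k ≤ d) :
    SX X k = SX X (k-1) + ent X.2 k := by
  rw [SX, SX, ← sum_ite_eq_ent X.2 h1 h2, ← Finset.sum_add_distrib]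
  refine Finset.sum_congr rfl fun j _ => ?_
  by_cases ha : (j:ℕ)+1 ≤ k-1
  · rw [if_pos (by omega), if_pos ha, if_neg (by omega)]; omega
  · by_cases hb : (j:ℕ)+1 = k
    · rw [if_pos (by omega), if_neg ha, if_pos hb]; omega
    · rw [if_neg (by omega), if_neg ha, if_neg hb]

lemma BX_step (X : E d) {k : ℕ} (h1 : 1 ≤ k) (h2 : k ≤ d) :
    BX X k = BX X (k+1) + ent X.1 k := by
  rw [BX, BX, ← sum_ite_eq_ent X.1 h1 h2, ← Finset.sum_add_distrib]
  refine Finset.sum_congr rfl fun j _ => ?_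
  by_cases ha : k+1 ≤ (j:ℕ)+1
  · rw [if_pos (by omega), if_pos ha, if_neg (by omega)]; omega
  · by_cases hb : (j:ℕ)+1 = k
    · rw [if_pos (by omega), if_neg ha, if_pos hb]; omega
    · rw [if_neg (by omega), if_neg ha, if_neg hb]

lemma SX_total {X : E d} {k : ℕ} (h : supSupp X.2 ≤ k) : SX X k = ∑ j, X.2 j := by
  refine Finset.sum_congr rfl fun j _ => ?_
  by_cases hz : X.2 j = 0
  · split <;> simp [hz]
  · rw [if_pos (le_trans (le_supSupp hz) h)]

lemma SX_zero_of_lt {X : E d} {k : ℕ} (h : k < infSupp X.2) : SX X k = 0 := by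
  refine Finset.sum_eq_zero fun j _ => ?_
  by_cases hz : X.2 j = 0
  · split <;> simp [hz]
  · have := infSupp_le hz
    rw [if_neg (by omega)]

lemma BX_total {X : E d} {k : ℕ} (h : k ≤ infSupp X.1) : BX X k = ∑ j, X.1 j := by
  refine Finset.sum_congr rfl fun j _ => ?_
  by_cases hz : X.1 j = 0
  · split <;> simp [hz]
  · rw [if_pos (le_trans h (infSupp_le hz))]

lemma BX_zero_of_lt {X : E d} {k : ℕ} (h : supSupp X.1 < k) : BX X k = 0 := by
  refine Finset.sum_eq_zero fun j _ => ?_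
  by_cases hz : X.1 j = 0
  · split <;> simp [hz]
  · have := le_supSupp hz
    rw [if_neg (by omega)]

lemma SX_lt_total {X : E d} {k : ℕ} (h : k < supSupp X.2) : SX X k < ∑ j, X.2 j := by
  set s := supSupp X.2 with hs
  have hs1 : 1 ≤ s := by omega
  have hsd : s ≤ d := supSupp_le_d _
  have h1 : SX X k ≤ SX X (s-1) := SX_mono X (by omega)
  have h2 : SX X s = SX X (s-1) + ent X.2 s := SX_step X hs1 hsd
  have h3 : ent X.2 s ≠ 0 := ent_supSupp hs1
  have h4 : SX X s = ∑ j, X.2 j := SX_total (le_refl _)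
  omega

lemma BX_lt_total {X : E d} {k : ℕ} (h : infSupp X.1 < k) (hd : infSupp X.1 ≤ d) :
    BX X k < ∑ j, X.1 j := by
  set t := infSupp X.1 with ht
  have ht1 : 1 ≤ t := one_le_infSupp _
  have h1 : BX X k ≤ BX X (t+1) := BX_anti X (by omega)
  have h2 : BX X t = BX X (t+1) + ent X.1 t := BX_step X ht1 hd
  have h3 : ent X.1 t ≠ 0 := ent_infSupp hd
  have h4 : BX X t = ∑ j, X.1 j := BX_total (le_refl _)
  omega
lemma le_pB {Y : E d} {k : ℕ} (h1 : 1 ≤ k) (h2 : k ≤ d) (h : gX Y k < 0) : k ≤ pB Y :=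
  Finset.le_sup (f := id) (by
    simp only [Finset.mem_filter, Finset.mem_Icc]
    exact ⟨⟨h1, h2⟩, h⟩)

lemma pB_mem {Y : E d} (h : 1 ≤ pB Y) : gX Y (pB Y) < 0 ∧ pB Y ≤ d := by
  have hne : ((Finset.Icc 1 d).filter fun k => gX Y k < 0).Nonempty := by
    by_contra he
    rw [Finset.not_nonempty_iff_eq_empty] at he
    rw [pB, he] at h; simp at h
  have hm := nat_sup_mem hne
  rw [← pB] at hm
  simp only [Finset.mem_filter, Finset.mem_Icc] at hm
  exact ⟨hm.2, hm.1.2⟩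

lemma pB_le_d {Y : E d} : pB Y ≤ d := by
  rcases Nat.eq_zero_or_pos (pB Y) with h | h
  · omega
  · exact (pB_mem h).2

lemma pB_eq {Y : E d} {p : ℕ} (hpd : p ≤ d) (hneg : 1 ≤ p → gX Y p < 0)
    (hpos : ∀ k, p < k → k ≤ d → 0 ≤ gX Y k) : pB Y = p := by
  rcases Nat.eq_zero_or_pos p with rfl | hp
  · have he : ((Finset.Icc 1 d).filter fun k => gX Y k < 0) = ∅ := by
      rw [Finset.filter_eq_empty_iff]
      intro k hk
      rw [Finset.mem_Icc] at hk
      have := hpos k (by omega) hk.2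
      omega
    rw [pB, he, Finset.sup_empty]
    rfl
  · apply le_antisymm
    · refine Finset.sup_le ?_
      intro k hk
      simp only [id_eq]
      simp only [Finset.mem_filter, Finset.mem_Icc] at hk
      by_contra hlt
      have := hpos k (by omega) hk.1.2
      omega
    · exact le_pB hp hpd (hneg hp)

lemma pA_le {Y : E d} {k : ℕ} (h1 : 1 ≤ k) (h2 : k ≤ d) (h : 0 < gX Y k) : pA Y ≤ k := by
  have hm : k ∈ (Finset.Icc 1 d).filter fun k => 0 < gX Y k := by
    simp only [Finset.mem_filter, Finset.mem_Icc]
    exact ⟨⟨h1, h2⟩, h⟩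
  rw [pA, dif_pos ⟨k, hm⟩]
  exact Finset.min'_le _ _ hm

lemma pA_mem {Y : E d} (h : pA Y ≤ d) : 0 < gX Y (pA Y) ∧ 1 ≤ pA Y := by
  by_cases hne : ((Finset.Icc 1 d).filter fun k => 0 < gX Y k).Nonempty
  · have hpa : pA Y = ((Finset.Icc 1 d).filter fun k => 0 < gX Y k).min' hne := by
      rw [pA, dif_pos hne]
    have hm := Finset.min'_mem _ hne
    rw [← hpa] at hm
    simp only [Finset.mem_filter, Finset.mem_Icc] at hm
    exact ⟨hm.2, hm.1.1⟩
  · rw [pA, dif_neg hne] at h; omega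

lemma one_le_pA {Y : E d} : 1 ≤ pA Y := by
  by_cases h : pA Y ≤ d
  · exact (pA_mem h).2
  · omega

lemma pA_le_d1 {Y : E d} : pA Y ≤ d + 1 := by
  by_cases hne : ((Finset.Icc 1 d).filter fun k => 0 < gX Y k).Nonempty
  · have hpa : pA Y = ((Finset.Icc 1 d).filter fun k => 0 < gX Y k).min' hne := by
      rw [pA, dif_pos hne]
    have hm := Finset.min'_mem _ hne
    rw [← hpa] at hm
    simp only [Finset.mem_filter, Finset.mem_Icc] at hm
    omega
  · rw [pA, dif_neg hne]

lemma pA_eq {Y : E d} {q : ℕ} (hq1 : 1 ≤ q) (hqd : q ≤ d+1) (hpos : q ≤ d → 0 < gX Y q)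
    (hneg : ∀ k, 1 ≤ k → k < q → gX Y k ≤ 0) : pA Y = q := by
  by_cases hqd' : q ≤ d
  · apply le_antisymm (pA_le hq1 hqd' (hpos hqd'))
    have hd : pA Y ≤ d := le_trans (pA_le hq1 hqd' (hpos hqd')) hqd'
    obtain ⟨hg, h1⟩ := pA_mem hd
    by_contra hlt
    have := hneg (pA Y) h1 (by omega)
    omega
  · have he : ((Finset.Icc 1 d).filter fun k => 0 < gX Y k) = ∅ := by
      rw [Finset.filter_eq_empty_iff]
      intro k hk
      rw [Finset.mem_Icc] at hk
      have := hneg k hk.1 (by omega)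
      omega
    rw [pA, dif_neg (by rw [he]; simp)]
    omega

lemma gX_plateau {Y : E d} {k : ℕ} (h1 : pB Y < k) (h2 : k < pA Y) (h3 : 1 ≤ k) (h4 : k ≤ d) :
    gX Y k = 0 := by
  have ha : ¬ gX Y k < 0 := fun hc => by have := le_pB h3 h4 hc; omega
  have hb : ¬ 0 < gX Y k := fun hc => by have := pA_le h3 h4 hc; omega
  omega

lemma pB_lt_pA {Y : E d} : pB Y < pA Y := by
  rcases Nat.eq_zero_or_pos (pB Y) with h | h
  · have := one_le_pA (Y := Y); omega
  · by_cases h2 : pA Y ≤ d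
    · obtain ⟨hgB, hBd⟩ := pB_mem h
      obtain ⟨hgA, hA1⟩ := pA_mem h2
      by_contra hc
      have := gX_mono Y (show pA Y ≤ pB Y by omega)
      omega
    · have := pB_le_d (Y := Y); omega

lemma SX_add (X Z : E d) (k : ℕ) : SX (X+Z) k = SX X k + SX Z k := by
  rw [SX, SX, SX, ← Finset.sum_add_distrib]
  refine Finset.sum_congr rfl fun j _ => ?_
  have : (X+Z).2 j = X.2 j + Z.2 j := rfl
  split <;> omega

lemma BX_add (X Z : E d) (k : ℕ) : BX (X+Z) k = BX X k + BX Z k := by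
  rw [BX, BX, BX, ← Finset.sum_add_distrib]
  refine Finset.sum_congr rfl fun j _ => ?_
  have : (X+Z).1 j = X.1 j + Z.1 j := rfl
  split <;> omega

lemma gX_add (X Z : E d) (k : ℕ) : gX (X+Z) k = gX X k + gX Z k := by
  rw [gX, gX, gX, SX_add, BX_add]
  push_cast
  ring

lemma ent_add (x z : Fin d → ℕ) (k : ℕ) : ent (x + z) k = ent x k + ent z k := by
  rw [ent, ent, ent]
  split
  · rfl
  · rfl
lemma ent_eq_zero_of_lt_infSupp {z : Fin d → ℕ} {k : ℕ} (h : k < infSupp z) : ent z k = 0 := by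
  rw [ent]
  split
  · rename_i hk
    refine eq_zero_of_lt_infSupp (z := z) (j := ⟨k-1, by omega⟩) ?_
    simp only [Fin.val_mk]
    omega
  · rfl

lemma ent_eq_zero_of_supSupp_lt {z : Fin d → ℕ} {k : ℕ} (h : supSupp z < k) : ent z k = 0 := by
  rw [ent]
  split
  · rename_i hk
    refine eq_zero_of_supSupp_lt (z := z) (j := ⟨k-1, by omega⟩) ?_
    simp only [Fin.val_mk]
    omega
  · rfl

lemma BX_ge_ent {X : E d} {k : ℕ} : (ent X.1 k : ℤ) ≤ (BX X k : ℤ) := by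
  rcases Nat.eq_zero_or_pos k with rfl | hk
  · rw [ent_zero]; positivity
  · by_cases hkd : k ≤ d
    · have := BX_step X hk hkd
      omega
    · rw [ent_gt _ (by omega)]; positivity

lemma SX_ge_ent {X : E d} {k : ℕ} : (ent X.2 k : ℤ) ≤ (SX X k : ℤ) := by
  rcases Nat.eq_zero_or_pos k with rfl | hk
  · rw [ent_zero]; positivity
  · by_cases hkd : k ≤ d
    · have h := SX_step X hk hkd
      omega
    · rw [ent_gt _ (by omega)]; positivity

lemma gX_nonpos_of_lt_ask {X : E d} {k : ℕ} (h : k < ask X) : gX X k ≤ 0 := by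
  have h1 : SX X k = 0 := SX_zero_of_lt h
  rw [gX, h1]
  simp

lemma gX_nonneg_of_bid_lt {X : E d} {k : ℕ} (h : bid X < k) : 0 ≤ gX X k := by
  have h1 : BX X k = 0 := BX_zero_of_lt h
  rw [gX, h1]
  simp

lemma gX_neg_L {X : E d} {k : ℕ} (h1 : 1 ≤ k) (h2 : k ≤ bid X) (hL : bid X < ask X) :
    gX X k < 0 := by
  have hs : SX X k = 0 := SX_zero_of_lt (show k < infSupp X.2 from lt_of_le_of_lt h2 hL)
  have hb1 : 1 ≤ bid X := le_trans h1 h2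
  have hbd : bid X ≤ d := supSupp_le_d _
  have hstep := BX_step X hb1 hbd
  have hent : ent X.1 (bid X) ≠ 0 := ent_supSupp hb1
  have hanti := BX_anti X h2
  rw [gX, hs]
  omega

lemma gX_pos_L {X : E d} {k : ℕ} (h1 : ask X ≤ k) (h2 : k ≤ d) (hL : bid X < ask X) :
    0 < gX X k := by
  have hb : BX X k = 0 := BX_zero_of_lt (show supSupp X.1 < k from lt_of_lt_of_le hL h1)
  have ha1 : 1 ≤ ask X := one_le_infSupp _
  have had : ask X ≤ d := le_trans h1 h2
  have hstep := SX_step X ha1 had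
  have hent : ent X.2 (ask X) ≠ 0 := ent_infSupp had
  have hmono := SX_mono X h1
  rw [gX, hb]
  omega

lemma pB_of_L {X : E d} (hL : bid X < ask X) : pB X = bid X := by
  refine pB_eq (supSupp_le_d _) (fun h1 => gX_neg_L h1 (le_refl _) hL) ?_
  intro k hk _
  exact gX_nonneg_of_bid_lt hk

lemma pA_of_L {X : E d} (hL : bid X < ask X) : pA X = ask X := by
  refine pA_eq (one_le_infSupp _) (infSupp_le_d1 _) (fun h => gX_pos_L (le_refl _) h hL) ?_
  intro k _ hk
  exact gX_nonpos_of_lt_ask hk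

lemma clear_fixed {X : E d} (hL : X ∈ Lset d) : clear X = X := by
  have hL' : bid X < ask X := hL
  have hbid : bid X = supSupp X.1 := rfl
  have hask : ask X = infSupp X.2 := rfl
  have hpB := pB_of_L hL'
  have hpA := pA_of_L hL'
  have hplus : clearPlus X = X.1 := by
    rw [clearPlus, if_pos]
    · funext j
      rw [tauLow]
      split
      · rfl
      · rename_i hj
        refine (eq_zero_of_supSupp_lt (z := X.1) (j := j) ?_).symm
        rw [hpB] at hj
        push_cast at hj
        omega
    · rw [hpB]
      have hs : SX X (bid X) = 0 := SX_zero_of_lt hL'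
      have := BX_ge_ent (X := X) (k := bid X)
      rw [gX, hs]
      omega
  have hminus : clearMinus X = X.2 := by
    rw [clearMinus, if_pos]
    · funext j
      rw [tauHigh]
      split
      · rfl
      · rename_i hj
        refine (eq_zero_of_lt_infSupp (z := X.2) (j := j) ?_).symm
        rw [hpA] at hj
        push_cast at hj
        omega
    · rw [hpA]
      have hb : BX X (ask X) = 0 := BX_zero_of_lt hL'
      have := SX_ge_ent (X := X) (k := ask X)
      rw [gX, hb]
      omega
  rw [clear, hplus, hminus]
lemma clear_of_gamma {X : E d} (hL : X ∈ Lset d) {Y : E d} (hY : Y ∈ Gamma X) :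
    clear Y = X := by
  obtain ⟨Z, rfl, hsum, hst, hsa, hbt⟩ := hY
  have hL' : bid X < ask X := hL
  have hbid : bid X = supSupp X.1 := rfl
  have hask : ask X = infSupp X.2 := rfl
  have hbd2 : bid X ≤ d := supSupp_le_d X.1
  have ha1 : 1 ≤ ask X := one_le_infSupp X.2
  have had1 : ask X ≤ d+1 := infSupp_le_d1 X.2
  rcases Nat.eq_zero_or_pos (∑ j, Z.1 j) with hm | hm
  · have hz1 : Z.1 = 0 := funext fun j => Finset.sum_eq_zero_iff.mp hm j (Finset.mem_univ j)
    have hz2 : Z.2 = 0 := funext fun j =>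
      Finset.sum_eq_zero_iff.mp (hsum ▸ hm) j (Finset.mem_univ j)
    have hZ : Z = (0 : E d) := Prod.ext hz1 hz2
    rw [hZ, add_zero]
    exact clear_fixed hL
  · have hm2 : 0 < ∑ j, Z.2 j := hsum ▸ hm
    obtain ⟨j2, hj2⟩ : ∃ j, Z.2 j ≠ 0 := by
      by_contra hc
      push_neg at hc
      rw [Finset.sum_eq_zero (fun j _ => hc j)] at hm2
      omega
    obtain ⟨j1, hj1⟩ : ∃ j, Z.1 j ≠ 0 := by
      by_contra hc
      push_neg at hc
      rw [Finset.sum_eq_zero (fun j _ => hc j)] at hm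
      omega
    set s := supSupp Z.2 with hsdef
    set t := infSupp Z.1 with htdef
    have hs1 : 1 ≤ s := le_trans (by omega) (le_supSupp hj2)
    have hsd : s ≤ d := supSupp_le_d _
    have ht1 : 1 ≤ t := one_le_infSupp _
    have htd : t ≤ d := le_trans (infSupp_le hj1) (by have := j1.2; omega)
    have hsa' : s ≤ infSupp X.2 := hsa
    have hbt' : supSupp X.1 ≤ t := hbt
    have hBZ : ∀ k, k ≤ t → BX Z k = ∑ j, Z.1 j := fun k hk => BX_total hk
    have hSZ : ∀ k, s ≤ k → SX Z k = ∑ j, Z.2 j := fun k hk => SX_total hk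
    have R1 : ∀ k, k < s → gX (X+Z) k < 0 := by
      intro k hk
      have h1 : SX X k = 0 := SX_zero_of_lt (show k < infSupp X.2 by omega)
      have h2 : BX Z k = ∑ j, Z.1 j := hBZ k (by omega)
      have h3 : SX Z k < ∑ j, Z.2 j := SX_lt_total hk
      rw [gX, SX_add, BX_add, h1, h2]
      omega
    have R2 : ∀ k, s ≤ k → k ≤ t → gX (X+Z) k = gX X k := by
      intro k hk1 hk2
      rw [gX_add]
      have h0 : gX Z k = 0 := by rw [gX, hSZ k hk1, hBZ k hk2]; omega
      omega
    have R3 : ∀ k, t < k → k ≤ d → 0 < gX (X+Z) k := by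
      intro k hk1 hk2
      have h1 : 0 ≤ gX X k := gX_nonneg_of_bid_lt (by omega)
      have h2 : BX Z k < ∑ j, Z.1 j := BX_lt_total hk1 htd
      have h3 : SX Z k = ∑ j, Z.2 j := hSZ k (by omega)
      rw [gX_add]
      have h4 : 0 < gX Z k := by rw [gX, h3]; omega
      omega
    have hpB : pB (X+Z) = max (s-1) (bid X) := by
      refine pB_eq (by omega) ?_ ?_
      · intro h1
        rcases le_or_gt s (bid X) with hc | hc
        · rw [max_eq_right (by omega), R2 (bid X) hc (by omega)]
          exact gX_neg_L (by omega) (le_refl _) hL'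
        · rw [max_eq_left (by omega)]
          exact R1 (s-1) (by omega)
      · intro k hk hkd
        rcases le_or_gt k t with hc | hc
        · rw [R2 k (by omega) hc]
          exact gX_nonneg_of_bid_lt (by omega)
        · exact le_of_lt (R3 k hc hkd)
    have hpA : pA (X+Z) = min (t+1) (ask X) := by
      refine pA_eq (by omega) (by omega) ?_ ?_
      · intro hqd
        rcases le_or_gt (ask X) t with hc | hc
        · rw [min_eq_right (by omega), R2 (ask X) (by omega) hc]
          exact gX_pos_L (le_refl _) (by omega) hL'
        · rw [min_eq_left (by omega)]
          exact R3 (t+1) (by omega) (by omega)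
      · intro k hk1 hk2
        rcases lt_or_ge k s with hc | hc
        · exact le_of_lt (R1 k hc)
        · rw [R2 k hc (by omega)]
          exact gX_nonpos_of_lt_ask (by omega)
    have hplus : clearPlus (X+Z) = X.1 := by
      rcases lt_or_eq_of_le (show max (s-1) (bid X) ≤ t by omega) with hpt | hpt
      · -- case 1: p < t
        have hcond : gX (X+Z) (pB (X+Z)) ≤ -(ent (X+Z).1 (pB (X+Z)) : ℤ) := by
          rw [hpB]
          have h1 : ent (X+Z).1 (max (s-1) (bid X))
              = ent X.1 (max (s-1) (bid X)) + ent Z.1 (max (s-1) (bid X)) := ent_add _ _ _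
          have h2 : ent Z.1 (max (s-1) (bid X)) = 0 := ent_eq_zero_of_lt_infSupp (by omega)
          have h3 : SX X (max (s-1) (bid X)) = 0 := SX_zero_of_lt (by omega)
          have h4 : BX Z (max (s-1) (bid X)) = ∑ j, Z.1 j := hBZ _ (by omega)
          have h5 : SX Z (max (s-1) (bid X)) ≤ ∑ j, Z.2 j :=
            le_trans (SX_mono Z (show max (s-1) (bid X) ≤ d by omega))
              (le_of_eq (hSZ d (by omega)))
          have h6 := BX_ge_ent (X := X) (k := max (s-1) (bid X))
          rw [gX, SX_add, BX_add, h3, h4, h1, h2]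
          omega
        rw [clearPlus, if_pos hcond]
        funext j
        simp only [tauLow]
        rw [hpB]
        split
        · rename_i hj
          push_cast at hj
          have hz : Z.1 j = 0 := eq_zero_of_lt_infSupp (by omega)
          show X.1 j + Z.1 j = X.1 j
          omega
        · rename_i hj
          push_cast at hj
          exact (eq_zero_of_supSupp_lt (by omega)).symm
      · -- case 2: p = t, so bid X = t
        have hbt2 : bid X = t := by omega
        have hgv : gX (X+Z) t = -(ent X.1 t : ℤ) := by
          have h3 := R2 t (by omega) (le_refl _)
          have h4 : SX X t = 0 := SX_zero_of_lt (by omega)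
          have h5 : BX X t = BX X (t+1) + ent X.1 t := BX_step X ht1 htd
          have h6 : BX X (t+1) = 0 := BX_zero_of_lt (by omega)
          rw [h3, gX, h4, h5, h6]
          push_cast
          ring
        have hcond : ¬ (gX (X+Z) (pB (X+Z)) ≤ -(ent (X+Z).1 (pB (X+Z)) : ℤ)) := by
          have hea : ent (X+Z).1 t = ent X.1 t + ent Z.1 t := ent_add X.1 Z.1 t
          rw [hpB, hpt, hgv, hea]
          have h2 : ent Z.1 t ≠ 0 := ent_infSupp htd
          have h2' : 0 < ent Z.1 t := Nat.pos_of_ne_zero h2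
          push_cast
          omega
        rw [clearPlus, if_neg hcond]
        funext j
        simp only [tauLow, e]
        rw [hpB, hpt, hgv]
        have htn : (max 0 (-(-(ent X.1 t : ℤ)))).toNat = ent X.1 t := by simp
        rw [htn]
        have hadd : (X+Z).1 j = X.1 j + Z.1 j := rfl
        rcases lt_trichotomy ((j:ℕ)+1) t with hj | hj | hj
        · rw [if_pos (by push_cast; omega), if_neg (by omega)]
          have hz : Z.1 j = 0 := eq_zero_of_lt_infSupp (by omega)
          omega
        · rw [if_neg (by push_cast; omega), if_pos hj]
          have he2 : ent X.1 t = X.1 j := by rw [← hj, ent_apply]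
          omega
        · rw [if_neg (by push_cast; omega), if_neg (by omega)]
          have hz : X.1 j = 0 := eq_zero_of_supSupp_lt (by omega)
          omega
    have hminus : clearMinus (X+Z) = X.2 := by
      rcases lt_or_eq_of_le (show s ≤ min (t+1) (ask X) by omega) with hq | hq
      · -- case 1': s < q
        have hcond : (ent (X+Z).2 (pA (X+Z)) : ℤ) ≤ gX (X+Z) (pA (X+Z)) := by
          rw [hpA]
          have h1 : ent (X+Z).2 (min (t+1) (ask X))
              = ent X.2 (min (t+1) (ask X)) + ent Z.2 (min (t+1) (ask X)) := ent_add _ _ _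
          have h2 : ent Z.2 (min (t+1) (ask X)) = 0 := ent_eq_zero_of_supSupp_lt (by omega)
          have h3 : BX X (min (t+1) (ask X)) = 0 := BX_zero_of_lt (by omega)
          have h4 : SX Z (min (t+1) (ask X)) = ∑ j, Z.2 j := hSZ _ (by omega)
          have h5 : BX Z (min (t+1) (ask X)) ≤ ∑ j, Z.1 j :=
            le_trans (BX_anti Z (show 1 ≤ min (t+1) (ask X) by omega))
              (le_of_eq (hBZ 1 (by omega)))
          have h6 := SX_ge_ent (X := X) (k := min (t+1) (ask X))
          rw [gX, SX_add, BX_add, h3, h4, h1, h2]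
          omega
        rw [clearMinus, if_pos hcond]
        funext j
        simp only [tauHigh]
        rw [hpA]
        split
        · rename_i hj
          push_cast at hj
          have hz : Z.2 j = 0 := eq_zero_of_supSupp_lt (by omega)
          show X.2 j + Z.2 j = X.2 j
          omega
        · rename_i hj
          push_cast at hj
          exact (eq_zero_of_lt_infSupp (by omega)).symm
      · -- case 2': q = s, so ask X = s
        have hasks : ask X = s := by omega
        have hgv : gX (X+Z) s = (ent X.2 s : ℤ) := by
          have h3 := R2 s (le_refl _) (by omega)
          have h4 : BX X s = 0 := BX_zero_of_lt (by omega)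
          have h5 : SX X s = SX X (s-1) + ent X.2 s := SX_step X hs1 hsd
          have h6 : SX X (s-1) = 0 := SX_zero_of_lt (by omega)
          rw [h3, gX, h4, h5, h6]
          push_cast
          ring
        have hcond : ¬ ((ent (X+Z).2 (pA (X+Z)) : ℤ) ≤ gX (X+Z) (pA (X+Z))) := by
          have hea : ent (X+Z).2 s = ent X.2 s + ent Z.2 s := ent_add X.2 Z.2 s
          rw [hpA, ← hq, hgv, hea]
          have h2 : ent Z.2 s ≠ 0 := ent_supSupp hs1
          have h2' : 0 < ent Z.2 s := Nat.pos_of_ne_zero h2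
          push_cast
          omega
        rw [clearMinus, if_neg hcond]
        funext j
        simp only [tauHigh, e]
        rw [hpA, ← hq, hgv]
        have htn : (max 0 ((ent X.2 s : ℤ))).toNat = ent X.2 s := by simp
        rw [htn]
        have hadd : (X+Z).2 j = X.2 j + Z.2 j := rfl
        rcases lt_trichotomy ((j:ℕ)+1) s with hj | hj | hj
        · rw [if_neg (by push_cast; omega), if_neg (by omega)]
          have hz : X.2 j = 0 := eq_zero_of_lt_infSupp (by omega)
          omega
        · rw [if_neg (by push_cast; omega), if_pos hj]
          have he2 : ent X.2 s = X.2 j := by rw [← hj, ent_apply]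
          omega
        · rw [if_pos (by push_cast; omega), if_neg (by omega)]
          have hz : Z.2 j = 0 := eq_zero_of_supSupp_lt (by omega)
          omega
    rw [clear, hplus, hminus]
lemma sum_tauLow (Y : E d) (p : ℕ) :
    (∑ j, tauLow (p:ℤ) Y.1 j) + BX Y (p+1) = ∑ j, Y.1 j := by
  rw [BX, ← Finset.sum_add_distrib]
  refine Finset.sum_congr rfl fun j _ => ?_
  simp only [tauLow]
  by_cases h : (j:ℕ)+1 ≤ p
  · rw [if_pos (by push_cast; omega), if_neg (by omega)]
    omega
  · rw [if_neg (by push_cast; omega), if_pos (by omega)]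
    omega

lemma sum_tauHigh (Y : E d) (q : ℕ) (hq : 1 ≤ q) :
    (∑ j, tauHigh (q:ℤ) Y.2 j) + SX Y (q-1) = ∑ j, Y.2 j := by
  rw [SX, ← Finset.sum_add_distrib]
  refine Finset.sum_congr rfl fun j _ => ?_
  simp only [tauHigh]
  by_cases h : q ≤ (j:ℕ)+1
  · rw [if_pos (by push_cast; omega), if_neg (by omega)]
    omega
  · rw [if_neg (by push_cast; omega), if_pos (by omega)]
    omega

lemma sum_e {p : ℕ} (h1 : 1 ≤ p) (h2 : p ≤ d) : (∑ j : Fin d, e p j) = 1 := by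
  have h := sum_ite_eq_ent (fun _ : Fin d => 1) h1 h2
  simp only [e]
  rw [h, ent, dif_pos ⟨h1, h2⟩]

lemma BX_le_total (Y : E d) (k : ℕ) : BX Y k ≤ ∑ j, Y.1 j := by
  refine Finset.sum_le_sum fun j _ => ?_
  split
  · exact le_refl _
  · exact Nat.zero_le _

lemma SX_le_total (Y : E d) (k : ℕ) : SX Y k ≤ ∑ j, Y.2 j := by
  refine Finset.sum_le_sum fun j _ => ?_
  split
  · exact le_refl _
  · exact Nat.zero_le _

lemma supSupp_witness {z : Fin d → ℕ} (h : ∃ j, z j ≠ 0) :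
    ∃ j : Fin d, z j ≠ 0 ∧ (j:ℕ)+1 = supSupp z := by
  obtain ⟨j0, hj0⟩ := h
  have hne : (supp z).Nonempty := by
    refine ⟨(j0:ℕ)+1, ?_⟩
    simp only [supp, Finset.mem_image, Finset.mem_filter, Finset.mem_univ, true_and]
    exact ⟨j0, Nat.pos_of_ne_zero hj0, rfl⟩
  have hm : supSupp z ∈ supp z := nat_sup_mem hne
  simp only [supp, Finset.mem_image, Finset.mem_filter, Finset.mem_univ, true_and] at hm
  obtain ⟨j, hj, hje⟩ := hm
  exact ⟨j, by omega, hje⟩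

lemma infSupp_witness {z : Fin d → ℕ} (h : ∃ j, z j ≠ 0) :
    ∃ j : Fin d, z j ≠ 0 ∧ (j:ℕ)+1 = infSupp z := by
  obtain ⟨j0, hj0⟩ := h
  have hne : (supp z).Nonempty := by
    refine ⟨(j0:ℕ)+1, ?_⟩
    simp only [supp, Finset.mem_image, Finset.mem_filter, Finset.mem_univ, true_and]
    exact ⟨j0, Nat.pos_of_ne_zero hj0, rfl⟩
  have hm : infSupp z ∈ supp z := by
    rw [infSupp, dif_pos hne]
    exact Finset.min'_mem _ _
  simp only [supp, Finset.mem_image, Finset.mem_filter, Finset.mem_univ, true_and] at hm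
  obtain ⟨j, hj, hje⟩ := hm
  exact ⟨j, by omega, hje⟩

lemma SX_d_total (Y : E d) : SX Y d = ∑ j, Y.2 j :=
  Finset.sum_congr rfl fun j _ => if_pos (by have := j.2; omega)

lemma BX_zero_total (Y : E d) : BX Y 0 = ∑ j, Y.1 j :=
  Finset.sum_congr rfl fun j _ => if_pos (by omega)
lemma mem_gamma_clear (Y : E d) : Y ∈ Gamma (clear Y) := by
  set p := pB Y with hpdef
  set q := pA Y with hqdef
  have hpq : p < q := pB_lt_pA
  have hpd : p ≤ d := pB_le_d
  have hq1 : 1 ≤ q := one_le_pA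
  have hqd1 : q ≤ d+1 := pA_le_d1
  have hplat : ∀ k, p+1 ≤ k → k ≤ q-1 → (SX Y k : ℤ) = BX Y k := by
    intro k h1 h2
    have h := gX_plateau (Y := Y) (k := k) (by omega) (by omega) (by omega) (by omega)
    rw [gX] at h
    omega
  have hkey : ∀ k, p+1 ≤ k → k ≤ q-1 → SX Y k = BX Y (p+1) := by
    intro k h1 h2
    have e1 := hplat (p+1) (le_refl _) (by omega)
    have e2 := hplat k h1 h2
    have m1 := SX_mono Y h1
    have m2 := BX_anti Y h1
    omega
  have hY1_inner : ∀ j : Fin d, p+1 ≤ (j:ℕ)+1 → (j:ℕ)+1 ≤ q-2 → Y.1 j = 0 := by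
    intro j h1 h2
    have e1 := hkey ((j:ℕ)+1) h1 (by omega)
    have e2 := hkey ((j:ℕ)+1+1) (by omega) (by omega)
    have f1 := hplat ((j:ℕ)+1) h1 (by omega)
    have f2 := hplat ((j:ℕ)+1+1) (by omega) (by omega)
    have hstep := BX_step Y (k := (j:ℕ)+1) (by omega) (by omega)
    have hent : ent Y.1 ((j:ℕ)+1) = Y.1 j := ent_apply _ _
    omega
  have hY2_inner : ∀ j : Fin d, p+2 ≤ (j:ℕ)+1 → (j:ℕ)+1 ≤ q-1 → Y.2 j = 0 := by
    intro j h1 h2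
    have f1 := hplat ((j:ℕ)+1) (by omega) h2
    have f0 := hplat ((j:ℕ)) (by omega) (by omega)
    have hstep := SX_step Y (k := (j:ℕ)+1) (by omega) (by omega)
    simp only [Nat.add_sub_cancel] at hstep
    have m2 := BX_anti Y (show (j:ℕ) ≤ (j:ℕ)+1 by omega)
    have hent : ent Y.2 ((j:ℕ)+1) = Y.2 j := ent_apply _ _
    omega
  -- case 2 consequences, plus side
  have case2P : ¬ (gX Y p ≤ -(ent Y.1 p : ℤ)) →
      1 ≤ p ∧ q = p+1 ∧ BX Y (p+1) < SX Y p ∧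
      (max 0 (-(gX Y p))).toNat = BX Y p - SX Y p ∧ SX Y p ≤ BX Y p ∧
      BX Y p = BX Y (p+1) + ent Y.1 p ∧ (max 0 (-(gX Y p))).toNat < ent Y.1 p := by
    intro hc
    have hp1 : 1 ≤ p := by
      by_contra h0
      apply hc
      have hp0 : p = 0 := by omega
      rw [hp0, ent_zero, gX, SX_zero]
      push_cast
      omega
    have hgneg : gX Y p < 0 := (pB_mem hp1).1
    have hstep := BX_step Y hp1 hpd
    rw [gX] at hc hgneg
    have hq : q = p+1 := by
      by_contra hq2
      have e1 := hkey (p+1) (le_refl _) (by omega)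
      have f1 := hplat (p+1) (le_refl _) (by omega)
      have m1 := SX_mono Y (show p ≤ p+1 by omega)
      omega
    refine ⟨hp1, hq, by omega, ?_, by omega, hstep, ?_⟩
    · rw [gX]; omega
    · rw [gX]; omega
  -- case 2 consequences, minus side
  have case2M : ¬ ((ent Y.2 q : ℤ) ≤ gX Y q) →
      q ≤ d ∧ p = q-1 ∧ SX Y (q-1) < BX Y q ∧
      (max 0 (gX Y q)).toNat = SX Y q - BX Y q ∧ BX Y q ≤ SX Y q ∧
      SX Y q = SX Y (q-1) + ent Y.2 q ∧ (max 0 (gX Y q)).toNat < ent Y.2 q := by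
    intro hc
    have hqd : q ≤ d := by
      by_contra h0
      apply hc
      have hq0 : q = d+1 := by omega
      rw [hq0, ent_gt _ (by omega), gX, BX_dp1]
      push_cast
      omega
    have hgpos : 0 < gX Y q := (pA_mem hqd).1
    have hstep := SX_step Y hq1 hqd
    rw [gX] at hc hgpos
    have hp : p = q-1 := by
      by_contra hp2
      have e1 := hkey (q-1) (by omega) (le_refl _)
      have f1 := hplat (q-1) (by omega) (le_refl _)
      have m1 := BX_anti Y (show q-1 ≤ q by omega)
      omega
    refine ⟨hqd, hp, by omega, ?_, by omega, hstep, ?_⟩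
    · rw [gX]; omega
    · rw [gX]; omega
  -- packaged facts for the plus side
  have hP : (∀ j, clearPlus Y j ≤ Y.1 j) ∧
      ((∑ j, clearPlus Y j) + max (SX Y p) (BX Y (p+1)) = ∑ j, Y.1 j) ∧
      (∀ j, clearPlus Y j ≠ 0 → (j:ℕ)+1 ≤ p) ∧
      (∀ j, Y.1 j ≠ clearPlus Y j →
        (q-1 ≤ (j:ℕ)+1 ∧ p+1 ≤ (j:ℕ)+1) ∨
        ((j:ℕ)+1 = p ∧ q = p+1 ∧ BX Y (p+1) < SX Y p)) := by
    by_cases c1 : gX Y p ≤ -(ent Y.1 p : ℤ)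
    · have hCP : clearPlus Y = tauLow (p:ℤ) Y.1 := by rw [clearPlus, if_pos c1]
      have hSB : SX Y p ≤ BX Y (p+1) := by
        rcases Nat.eq_zero_or_pos p with h0 | h1
        · rw [h0, SX_zero]
          exact Nat.zero_le _
        · have hstep := BX_step Y h1 hpd
          have hge := BX_ge_ent (X := Y) (k := p)
          rw [gX] at c1
          omega
      refine ⟨?_, ?_, ?_, ?_⟩
      · intro j
        rw [hCP]
        simp only [tauLow]
        split
        · exact le_refl _
        · exact Nat.zero_le _
      · rw [hCP, max_eq_right hSB]
        exact sum_tauLow Y p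
      · intro j hj
        by_contra hcon
        apply hj
        rw [hCP]
        simp only [tauLow]
        rw [if_neg (by push_cast; omega)]
      · intro j hne
        rw [hCP] at hne
        simp only [tauLow] at hne
        have h1 : p+1 ≤ (j:ℕ)+1 := by
          by_contra hcon
          apply hne
          rw [if_pos (by push_cast; omega)]
        refine Or.inl ⟨?_, h1⟩
        by_contra h2
        have hz : Y.1 j = 0 := hY1_inner j h1 (by omega)
        apply hne
        rw [if_neg (by push_cast; omega), hz]
    · obtain ⟨hp1, hq, hBS, hcval, hSBle, hstep, hclt⟩ := case2P c1
      have hCP : clearPlus Y =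
          fun j => tauLow ((p:ℤ)-1) Y.1 j + (max 0 (-(gX Y p))).toNat * e p j := by
        rw [clearPlus, if_neg c1]
      have hentp : ∀ j : Fin d, (j:ℕ)+1 = p → ent Y.1 p = Y.1 j := by
        intro j hj
        rw [← hj, ent_apply]
      refine ⟨?_, ?_, ?_, ?_⟩
      · intro j
        rw [hCP]
        simp only [tauLow, e]
        rcases lt_trichotomy ((j:ℕ)+1) p with hj | hj | hj
        · rw [if_pos (by push_cast; omega), if_neg (by omega)]
          omega
        · rw [if_neg (by push_cast; omega), if_pos hj]
          have := hentp j hj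
          omega
        · rw [if_neg (by push_cast; omega), if_neg (by omega)]
          omega
      · rw [hCP]
        rw [Finset.sum_add_distrib, ← Finset.mul_sum, sum_e hp1 hpd]
        have hcast : ((p:ℤ)-1) = ((p-1:ℕ):ℤ) := by push_cast; omega
        rw [hcast]
        have hsum := sum_tauLow Y (p-1)
        rw [show p-1+1 = p by omega] at hsum
        have htot := BX_le_total Y p
        rw [max_eq_left (le_of_lt hBS)]
        omega
      · intro j hj
        by_contra hcon
        apply hj
        rw [hCP]
        simp only [tauLow, e]
        rw [if_neg (by push_cast; omega), if_neg (by omega)]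
        omega
      · intro j hne
        rw [hCP] at hne
        simp only [tauLow, e] at hne
        rcases lt_trichotomy ((j:ℕ)+1) p with hj | hj | hj
        · exfalso
          apply hne
          rw [if_pos (by push_cast; omega), if_neg (by omega)]
          omega
        · exact Or.inr ⟨hj, hq, hBS⟩
        · exact Or.inl ⟨by omega, by omega⟩
  -- packaged facts for the minus side
  have hM : (∀ j, clearMinus Y j ≤ Y.2 j) ∧
      ((∑ j, clearMinus Y j) + max (BX Y q) (SX Y (q-1)) = ∑ j, Y.2 j) ∧
      (∀ j, clearMinus Y j ≠ 0 → q ≤ (j:ℕ)+1) ∧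
      (∀ j, Y.2 j ≠ clearMinus Y j →
        ((j:ℕ)+1 ≤ p+1 ∧ (j:ℕ)+1 ≤ q-1) ∨
        ((j:ℕ)+1 = q ∧ p = q-1 ∧ SX Y (q-1) < BX Y q)) := by
    by_cases c2 : (ent Y.2 q : ℤ) ≤ gX Y q
    · have hCM : clearMinus Y = tauHigh (q:ℤ) Y.2 := by rw [clearMinus, if_pos c2]
      have hBS : BX Y q ≤ SX Y (q-1) := by
        rcases le_or_gt q d with hqd | hqd
        · have hstep := SX_step Y hq1 hqd
          rw [gX] at c2
          omega
        · have : BX Y q = 0 := by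
            rw [show q = d+1 by omega]
            exact BX_dp1 Y
          omega
      refine ⟨?_, ?_, ?_, ?_⟩
      · intro j
        rw [hCM]
        simp only [tauHigh]
        split
        · exact le_refl _
        · exact Nat.zero_le _
      · rw [hCM, max_eq_right hBS]
        exact sum_tauHigh Y q hq1
      · intro j hj
        by_contra hcon
        apply hj
        rw [hCM]
        simp only [tauHigh]
        rw [if_neg (by push_cast; omega)]
      · intro j hne
        rw [hCM] at hne
        simp only [tauHigh] at hne
        have h1 : (j:ℕ)+1 ≤ q-1 := by
          by_contra hcon
          apply hne
          rw [if_pos (by push_cast; omega)]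
        refine Or.inl ⟨?_, h1⟩
        by_contra h2
        have hz : Y.2 j = 0 := hY2_inner j (by omega) h1
        apply hne
        rw [if_neg (by push_cast; omega), hz]
    · obtain ⟨hqd, hpmatch, hBS, hcval, hSBle, hstep, hclt⟩ := case2M c2
      have hCM : clearMinus Y =
          fun j => tauHigh ((q:ℤ)+1) Y.2 j + (max 0 (gX Y q)).toNat * e q j := by
        rw [clearMinus, if_neg c2]
      have hentq : ∀ j : Fin d, (j:ℕ)+1 = q → ent Y.2 q = Y.2 j := by
        intro j hj
        rw [← hj, ent_apply]
      refine ⟨?_, ?_, ?_, ?_⟩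
      · intro j
        rw [hCM]
        simp only [tauHigh, e]
        rcases lt_trichotomy ((j:ℕ)+1) q with hj | hj | hj
        · rw [if_neg (by push_cast; omega), if_neg (by omega)]
          omega
        · rw [if_neg (by push_cast; omega), if_pos hj]
          have := hentq j hj
          omega
        · rw [if_pos (by push_cast; omega), if_neg (by omega)]
          omega
      · rw [hCM]
        rw [Finset.sum_add_distrib, ← Finset.mul_sum, sum_e hq1 hqd]
        have hcast : ((q:ℤ)+1) = ((q+1:ℕ):ℤ) := by push_cast; omega
        rw [hcast]
        have hsum := sum_tauHigh Y (q+1) (by omega)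
        rw [show q+1-1 = q by omega] at hsum
        have htot := SX_le_total Y q
        rw [max_eq_left (le_of_lt hBS)]
        omega
      · intro j hj
        by_contra hcon
        apply hj
        rw [hCM]
        simp only [tauHigh, e]
        rw [if_neg (by push_cast; omega), if_neg (by omega)]
        omega
      · intro j hne
        rw [hCM] at hne
        simp only [tauHigh, e] at hne
        rcases lt_trichotomy ((j:ℕ)+1) q with hj | hj | hj
        · refine Or.inl ⟨?_, by omega⟩
          by_contra h2
          have hz : Y.2 j = 0 := hY2_inner j (by omega) (by omega)
          apply hne
          rw [if_neg (by push_cast; omega), if_neg (by omega), hz]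
          omega
        · exact Or.inr ⟨hj, hpmatch, hBS⟩
        · exfalso
          apply hne
          rw [if_pos (by push_cast; omega), if_neg (by omega)]
          omega
  obtain ⟨hPle, hPsum, hPsupp, hPcls⟩ := hP
  obtain ⟨hMle, hMsum, hMsupp, hMcls⟩ := hM
  -- conservation of executed volume
  have hcons : max (SX Y p) (BX Y (p+1)) = max (BX Y q) (SX Y (q-1)) := by
    rcases le_or_gt q (p+1) with hq2 | hq2
    · have hq3 : q = p+1 := by omega
      have e1 : SX Y (q-1) = SX Y p := by rw [show q-1 = p by omega]
      have e2 : BX Y (p+1) = BX Y q := by rw [hq3]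
      omega
    · have e1 := hkey (q-1) (by omega) (le_refl _)
      have e2 := hkey (p+1) (le_refl _) (by omega)
      have m1 := SX_mono Y (show p ≤ p+1 by omega)
      have m2 := BX_anti Y (show q-1 ≤ q by omega)
      have f1 := hplat (q-1) (by omega) (le_refl _)
      have f2 := hplat (p+1) (le_refl _) (by omega)
      omega
  -- the executed orders
  refine ⟨(fun j => Y.1 j - clearPlus Y j, fun j => Y.2 j - clearMinus Y j), ?_, ?_, ?_, ?_, ?_⟩
  · -- Y = clear Y + Z
    refine Prod.ext ?_ ?_
    · funext j
      have := hPle j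
      show Y.1 j = clearPlus Y j + (Y.1 j - clearPlus Y j)
      omega
    · funext j
      have := hMle j
      show Y.2 j = clearMinus Y j + (Y.2 j - clearMinus Y j)
      omega
  · -- sums equal
    show (∑ j, (Y.1 j - clearPlus Y j)) = ∑ j, (Y.2 j - clearMinus Y j)
    have h1 : (∑ j, clearPlus Y j) + (∑ j, (Y.1 j - clearPlus Y j)) = ∑ j, Y.1 j := by
      rw [← Finset.sum_add_distrib]
      exact Finset.sum_congr rfl fun j _ => by have := hPle j; omega
    have h2 : (∑ j, clearMinus Y j) + (∑ j, (Y.2 j - clearMinus Y j)) = ∑ j, Y.2 j := by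
      rw [← Finset.sum_add_distrib]
      exact Finset.sum_congr rfl fun j _ => by have := hMle j; omega
    omega
  · -- supSupp Z⁻ ≤ infSupp Z⁺
    by_cases hz1 : ∀ j : Fin d, Y.1 j - clearPlus Y j = 0
    · have hinf : infSupp (fun j => Y.1 j - clearPlus Y j) = d+1 :=
        le_antisymm (infSupp_le_d1 _)
          (le_infSupp (le_refl _) (fun j hj => absurd (hz1 j) hj))
      have := supSupp_le_d (fun j => Y.2 j - clearMinus Y j)
      show supSupp (fun j => Y.2 j - clearMinus Y j) ≤ infSupp (fun j => Y.1 j - clearPlus Y j)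
      omega
    · by_cases hz2 : ∀ j : Fin d, Y.2 j - clearMinus Y j = 0
      · have hsup : supSupp (fun j => Y.2 j - clearMinus Y j) = 0 :=
          Nat.le_zero.mp (supSupp_le (fun j hj => absurd (hz2 j) hj))
        show supSupp (fun j => Y.2 j - clearMinus Y j) ≤ infSupp (fun j => Y.1 j - clearPlus Y j)
        omega
      · push_neg at hz1 hz2
        obtain ⟨jt, hjt, hjte⟩ := infSupp_witness hz1
        obtain ⟨js, hjs, hjse⟩ := supSupp_witness hz2
        have hct := hPcls jt (by have := hPle jt; omega)
        have hcs := hMcls js (by have := hMle js; omega)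
        show supSupp (fun j => Y.2 j - clearMinus Y j) ≤ infSupp (fun j => Y.1 j - clearPlus Y j)
        rw [← hjte, ← hjse]
        rcases hcs with ⟨hs1, hs2⟩ | ⟨hs1, hs2, hs3⟩ <;>
          rcases hct with ⟨ht1, ht2⟩ | ⟨ht1, ht2, ht3⟩
        · omega
        · omega
        · omega
        · exfalso
          have e1 : SX Y (q-1) = SX Y p := by rw [show q-1 = p by omega]
          have e2 : BX Y (p+1) = BX Y q := by rw [show p+1 = q by omega]
          omega
  · -- supSupp Z⁻ ≤ ask (clear Y)
    have h1 : supSupp (fun j => Y.2 j - clearMinus Y j) ≤ q := by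
      refine supSupp_le fun j hj => ?_
      have := hMcls j (by have := hMle j; omega)
      omega
    have h2 : q ≤ infSupp (clearMinus Y) :=
      le_infSupp (by omega) (fun j hj => hMsupp j hj)
    exact le_trans h1 h2
  · -- bid (clear Y) ≤ infSupp Z⁺
    have h1 : supSupp (clearPlus Y) ≤ p := supSupp_le fun j hj => hPsupp j hj
    have h2 : p ≤ infSupp (fun j => Y.1 j - clearPlus Y j) := by
      refine le_infSupp (by omega) (fun j hj => ?_)
      have := hPcls j (by have := hPle j; omega)
      omega
    exact le_trans h1 h2
/-- Proposition 2.7: pre-image of the clearing operator. -/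
theorem preimage_clear_eq_Gamma (d : ℕ) (hd : 1 ≤ d) (X : E d) (hX : X ∈ Lset d) :
    {Y : E d | clear Y = X} = Gamma X := by
  ext Y
  constructor
  · intro hY
    have h := mem_gamma_clear Y
    rw [show clear Y = X from hY] at h
    exact h
  · intro hY
    exact clear_of_gamma hX hY

end OB
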